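/- arXiv:2108.11930 — 2 statements merged into one kernel-verified Lean document; each statement's English description precedes it below -/
import Mathlib

section
/- Let g : ℝ^d → ℝ be a continuous function vanishing in a neighborhood of the origin. Then for every t > 0, the map ω ↦ Σ_{0 < s ≤ t} g(Δω(s)), defined on the space of càdlàg functions ω : [0,∞) → ℝ^d, is continuous with respect to the local uniform topology. -/
/-!
Fix `ε > 0` with `g = 0` on the open `ε`-ball. A càdlàg path has only finitely many jumps of size
`≥ ε / 2` in `(0, t]`: around every time the path is nearly constant on each side, so jumps of a
fixed size cannot accumulate, and `[0, t]` is compact. Uniform convergence on `[0, t]` moves every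
jump by at most twice the uniform distance, so for large `n` the jumps of `ωn n` outside that
finite set are `< ε` and are killed by `g`. Both functionals are then eventually the same finite
sum, which converges term by term since `g` is continuous.
-/

open Filter Set Function
open scoped NNReal Topology

/-- A path `ω : [0,∞) → E` is càdlàg: right-continuous everywhere, with left
limits at every `t > 0`. -/
def Cadlag {E : Type*} [TopologicalSpace E] (ω : ℝ≥0 → E) : Prop :=
  (∀ t, ContinuousWithinAt ω (Ici t) t) ∧
  (∀ t : ℝ≥0, 0 < t → ∃ l, Tendsto ω (nhdsWithin t (Iio t)) (nhds l))

/-- Local uniform convergence of paths: uniform convergence on each `[0, T]`. -/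
def LocUnifTendsto {E : Type*} [PseudoMetricSpace E]
    (ωn : ℕ → ℝ≥0 → E) (ω : ℝ≥0 → E) : Prop :=
  ∀ T : ℝ≥0, TendstoUniformlyOn ωn ω atTop (Icc 0 T)

/-- The sum `∑_{0 < s ≤ t} g(Δω(s))` of `g` applied to the jumps of `ω`
over `(0, t]`.  Since `g` vanishes near `0` and `ω` is càdlàg, only finitely
many terms are nonzero. -/
noncomputable def jumpFunctional {d : ℕ} (g : EuclideanSpace ℝ (Fin d) → ℝ)
    (ω : ℝ≥0 → EuclideanSpace ℝ (Fin d)) (t : ℝ≥0) : ℝ :=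
  ∑' s : Ioc (0 : ℝ≥0) t, g (ω s - Function.leftLim ω s)

variable {E : Type*}

noncomputable def jump [AddGroup E] [TopologicalSpace E] (ω : ℝ≥0 → E) (s : ℝ≥0) : E :=
  ω s - leftLim ω s

namespace Cadlag

variable [NormedAddCommGroup E] {ω : ℝ≥0 → E}

theorem tendsto_leftLim (hω : Cadlag ω) {s : ℝ≥0} (hs : 0 < s) :
    Tendsto ω (𝓝[<] s) (𝓝 (leftLim ω s)) := by
  obtain ⟨l, hl⟩ := hω.2 s hs
  have : (𝓝[<] s).NeBot := nhdsLT_neBot_of_exists_lt ⟨0, hs⟩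
  rwa [leftLim_eq_of_tendsto hl]

theorem dist_leftLim_le (hω : Cadlag ω) {a s : ℝ≥0} {y : E} {r : ℝ} (has : a < s)
    (h : ∀ u ∈ Ioo a s, dist (ω u) y ≤ r) : dist (leftLim ω s) y ≤ r := by
  have : (𝓝[<] s).NeBot := nhdsLT_neBot_of_exists_lt ⟨a, has⟩
  refine le_of_tendsto ((hω.tendsto_leftLim (pos_of_gt has)).dist tendsto_const_nhds) ?_
  filter_upwards [Ioo_mem_nhdsLT has] using h

theorem norm_jump_le_of_forall_Ioo (hω : Cadlag ω) {a b s : ℝ≥0} {y : E} {r : ℝ}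
    (h : ∀ u ∈ Ioo a b, dist (ω u) y ≤ r) (hs : s ∈ Ioo a b) : ‖jump ω s‖ ≤ 2 * r := by
  have hL : dist (leftLim ω s) y ≤ r :=
    hω.dist_leftLim_le hs.1 fun u hu => h u ⟨hu.1, hu.2.trans hs.2⟩
  calc ‖jump ω s‖ = dist (ω s) (leftLim ω s) := (dist_eq_norm _ _).symm
    _ ≤ dist (ω s) y + dist (leftLim ω s) y := dist_triangle_right _ _ _
    _ ≤ 2 * r := by linarith [h s hs]

theorem eventually_nhdsGT_norm_jump_lt (hω : Cadlag ω) {c : ℝ} (hc : 0 < c) (x : ℝ≥0) :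
    ∀ᶠ s in 𝓝[>] x, ‖jump ω s‖ < c := by
  have hnear : {u | dist (ω u) (ω x) ≤ c / 4} ∈ 𝓝[>] x :=
    nhdsWithin_mono _ Ioi_subset_Ici_self
      (hω.1 x (Metric.closedBall_mem_nhds _ (by positivity)))
  obtain ⟨b, hxb, hb⟩ := mem_nhdsGT_iff_exists_Ioo_subset.1 hnear
  filter_upwards [Ioo_mem_nhdsGT hxb] with s hs
  linarith [hω.norm_jump_le_of_forall_Ioo (fun u hu => hb hu) hs]

theorem eventually_nhdsLT_norm_jump_lt (hω : Cadlag ω) {c : ℝ} (hc : 0 < c) (x : ℝ≥0) :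
    ∀ᶠ s in 𝓝[<] x, ‖jump ω s‖ < c := by
  rcases (zero_le : 0 ≤ x).eq_or_lt with rfl | hx
  · simp
  have hnear : {u | dist (ω u) (leftLim ω x) ≤ c / 4} ∈ 𝓝[<] x :=
    hω.tendsto_leftLim hx (Metric.closedBall_mem_nhds _ (by positivity))
  obtain ⟨a, hax, ha⟩ := (mem_nhdsLT_iff_exists_Ioo_subset' hx).1 hnear
  filter_upwards [Ioo_mem_nhdsLT hax] with s hs
  linarith [hω.norm_jump_le_of_forall_Ioo (fun u hu => ha hu) hs]

theorem eventually_nhdsNE_norm_jump_lt (hω : Cadlag ω) {c : ℝ} (hc : 0 < c) (x : ℝ≥0) :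
    ∀ᶠ s in 𝓝[≠] x, ‖jump ω s‖ < c := by
  rw [← nhdsLT_sup_nhdsGT]
  exact eventually_sup.2
    ⟨hω.eventually_nhdsLT_norm_jump_lt hc x, hω.eventually_nhdsGT_norm_jump_lt hc x⟩

theorem finite_setOf_le_norm_jump (hω : Cadlag ω) {c : ℝ} (hc : 0 < c) (t : ℝ≥0) :
    {s ∈ Icc 0 t | c ≤ ‖jump ω s‖}.Finite := by
  have hcod : {s | ‖jump ω s‖ < c} ∈ codiscreteWithin (Icc 0 t) :=
    mem_codiscreteWithin_iff_forall_mem_nhdsNE.2 fun x _ =>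
      mem_of_superset (hω.eventually_nhdsNE_norm_jump_lt hc x) subset_union_left
  have hfin := isCompact_Icc.finite_sdiff_of_mem_codiscreteWithin hcod
  simp only [sdiff_eq, compl_ofPred, not_lt] at hfin
  exact hfin

theorem dist_jump_le (h₁ : Cadlag ω) {ω' : ℝ≥0 → E} (h₂ : Cadlag ω') {t : ℝ≥0} {δ : ℝ}
    (hδ : ∀ u ∈ Icc 0 t, dist (ω u) (ω' u) ≤ δ) {s : ℝ≥0} (hs : s ∈ Ioc 0 t) :
    dist (jump ω s) (jump ω' s) ≤ 2 * δ := by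
  have : (𝓝[<] s).NeBot := nhdsLT_neBot_of_exists_lt ⟨0, hs.1⟩
  have hL : dist (leftLim ω s) (leftLim ω' s) ≤ δ := by
    refine le_of_tendsto ((h₁.tendsto_leftLim hs.1).dist (h₂.tendsto_leftLim hs.1)) ?_
    filter_upwards [Ioo_mem_nhdsLT hs.1] with u hu
    exact hδ u ⟨zero_le, hu.2.le.trans hs.2⟩
  calc dist (jump ω s) (jump ω' s) ≤ dist (ω s) (ω' s) + dist (leftLim ω s) (leftLim ω' s) :=
        dist_sub_sub_le _ _ _ _
    _ ≤ 2 * δ := by linarith [hδ s ⟨zero_le, hs.2⟩]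

end Cadlag

theorem tendsto_jump_of_tendstoUniformlyOn [NormedAddCommGroup E] {ι : Type*} {l : Filter ι}
    {ωn : ι → ℝ≥0 → E} {ω : ℝ≥0 → E} (hωn : ∀ n, Cadlag (ωn n)) (hω : Cadlag ω) {t : ℝ≥0}
    (h : TendstoUniformlyOn ωn ω l (Icc 0 t)) {s : ℝ≥0} (hs : s ∈ Ioc 0 t) :
    Tendsto (fun n => jump (ωn n) s) l (𝓝 (jump ω s)) := by
  refine Metric.tendsto_nhds.2 fun r hr => ?_
  filter_upwards [Metric.tendstoUniformlyOn_iff.1 h (r / 4) (by positivity)] with n hn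
  calc dist (jump (ωn n) s) (jump ω s) = dist (jump ω s) (jump (ωn n) s) := dist_comm _ _
    _ ≤ 2 * (r / 4) := hω.dist_jump_le (hωn n) (fun u hu => (hn u hu).le) hs
    _ < r := by linarith

theorem jumpFunctional_eq_sum {d : ℕ} {g : EuclideanSpace ℝ (Fin d) → ℝ} {ε : ℝ}
    (hg : ∀ x : EuclideanSpace ℝ (Fin d), ‖x‖ < ε → g x = 0)
    {ω : ℝ≥0 → EuclideanSpace ℝ (Fin d)} {t : ℝ≥0} {Φ : Finset (Ioc (0 : ℝ≥0) t)}
    (hΦ : ∀ s ∉ Φ, ‖jump ω s‖ < ε) :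
    jumpFunctional g ω t = ∑ s ∈ Φ, g (jump ω s) :=
  tsum_eq_sum fun s hs => hg _ (hΦ s hs)

theorem stmt5 {d : ℕ} (g : EuclideanSpace ℝ (Fin d) → ℝ)
    (hg_cont : Continuous g)
    (hg0 : ∃ ε > (0 : ℝ), ∀ x : EuclideanSpace ℝ (Fin d), ‖x‖ < ε → g x = 0)
    (ωn : ℕ → ℝ≥0 → EuclideanSpace ℝ (Fin d)) (ω : ℝ≥0 → EuclideanSpace ℝ (Fin d))
    (hωn : ∀ n, Cadlag (ωn n)) (hω : Cadlag ω)
    (hconv : LocUnifTendsto ωn ω) :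
    ∀ t : ℝ≥0, 0 < t →
      Tendsto (fun n => jumpFunctional g (ωn n) t) atTop
        (nhds (jumpFunctional g ω t)) := by
  obtain ⟨ε, hε, hgε⟩ := hg0
  intro t _
  have hbig : ((↑) ⁻¹' {s ∈ Icc 0 t | ε / 2 ≤ ‖jump ω s‖} : Set (Ioc (0 : ℝ≥0) t)).Finite :=
    (hω.finite_setOf_le_norm_jump (half_pos hε) t).preimage Subtype.val_injective.injOn
  set Φ := hbig.toFinset
  have hΦ : ∀ s ∉ Φ, ‖jump ω s‖ < ε / 2 := fun s hs => by
    by_contra! h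
    exact hs (hbig.mem_toFinset.2 ⟨Ioc_subset_Icc_self s.2, h⟩)
  have hclose : ∀ᶠ n in atTop, ∀ u ∈ Icc 0 t, dist (ωn n u) (ω u) ≤ ε / 4 := by
    filter_upwards [Metric.tendstoUniformlyOn_iff.1 (hconv t) (ε / 4) (by positivity)]
      with n hn u hu
    rw [dist_comm]; exact (hn u hu).le
  have hωn_eq : ∀ᶠ n in atTop, ∑ s ∈ Φ, g (jump (ωn n) s) = jumpFunctional g (ωn n) t := by
    filter_upwards [hclose] with n hn
    refine (jumpFunctional_eq_sum hgε fun s hs => ?_).symm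
    linarith [norm_le_norm_add_const_of_dist_le ((hωn n).dist_jump_le hω hn s.2), hΦ s hs]
  rw [jumpFunctional_eq_sum hgε fun s hs => (hΦ s hs).trans (half_lt_self hε)]
  refine Tendsto.congr' hωn_eq (tendsto_finsetSum Φ fun s _ => ?_)
  exact hg_cont.continuousAt.tendsto.comp
    (tendsto_jump_of_tendstoUniformlyOn hωn hω (hconv t) s.2)
end

section
/- Let 𝔘 : Ω → [0,1] and X : Ω → L^p_loc([0,∞), ℝ^d) and define, for m > 0, T_m(u, x) = inf{ t ≥ 0 : ∫₀ᵗ (1 + u + ‖x(s)‖^p) ds ≥ m } on [0,1] × L^p_loc([0,∞), ℝ^d). Then T_m is a continuous function of (u, x) with respect to the product of the usual topology on [0,1] and the local L^p topology. -/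
/-!
The integrand of `F t = ∫₀ᵗ (1 + u + ‖x s‖ ^ p) ds` is at least `1`, so `t ↦ F t - t` is
monotone. Hence `T_m = inf {t ≥ 0 | m ≤ F t}` satisfies `F t < m` for `0 ≤ t < T_m` and
`m < F t` for `t > T_m`; both strict inequalities survive pointwise convergence of `F`.
Pointwise convergence holds because, by Minkowski's inequality, the `L^p` norms of `x_n` on
`[0, t]` converge to that of `x`.
-/

open MeasureTheory Filter Set

/-- `T_m(u, x) = inf { t ≥ 0 : ∫₀ᵗ (1 + u + ‖x(s)‖^p) ds ≥ m }`. -/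
noncomputable def hittingTimeLp {d : ℕ} (p m : ℝ) (u : ℝ)
    (x : ℝ → EuclideanSpace ℝ (Fin d)) : ℝ :=
  sInf {t : ℝ | 0 ≤ t ∧ m ≤ ∫ s in (0 : ℝ)..t, (1 + u + ‖x s‖ ^ p)}

open Topology

section LpNorm

variable {ι α E : Type*} [MeasurableSpace α] {μ : Measure α} [NormedAddCommGroup E] {p : ℝ}

lemma integral_norm_rpow_eq_lpNorm_rpow (hp : 0 < p) {f : α → E}
    (hf : AEStronglyMeasurable f μ) :
    ∫ a, ‖f a‖ ^ p ∂μ = lpNorm f (ENNReal.ofReal p) μ ^ p := by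
  rw [lpNorm_eq_integral_norm_rpow_toReal (by simpa using hp) ENNReal.ofReal_ne_top hf,
    ENNReal.toReal_ofReal hp.le,
    Real.rpow_inv_rpow (integral_nonneg fun _ => by positivity) hp.ne']

lemma tendsto_integral_norm_rpow {l : Filter ι} (hp : 1 ≤ p) {f : ι → α → E} {g : α → E}
    (hf : ∀ i, MemLp (f i) (ENNReal.ofReal p) μ) (hg : MemLp g (ENNReal.ofReal p) μ)
    (h : Tendsto (fun i => ∫ a, ‖f i a - g a‖ ^ p ∂μ) l (𝓝 0)) :
    Tendsto (fun i => ∫ a, ‖f i a‖ ^ p ∂μ) l (𝓝 (∫ a, ‖g a‖ ^ p ∂μ)) := by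
  have hp0 : 0 < p := zero_lt_one.trans_le hp
  have hP : 1 ≤ ENNReal.ofReal p := by simpa using ENNReal.ofReal_le_ofReal hp
  have hdist : Tendsto (fun i => lpNorm (f i - g) (ENNReal.ofReal p) μ) l (𝓝 0) := by
    have h' := (Real.continuousAt_rpow_const 0 p⁻¹ (Or.inr (by positivity))).tendsto.comp h
    rw [Real.zero_rpow (by positivity)] at h'
    refine h'.congr fun i => ?_
    rw [Function.comp_apply, lpNorm_eq_integral_norm_rpow_toReal (by simpa using hp0)
      ENNReal.ofReal_ne_top ((hf i).sub hg).1, ENNReal.toReal_ofReal hp0.le]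
    rfl
  have hnorm : Tendsto (fun i => lpNorm (f i) (ENNReal.ofReal p) μ) l
      (𝓝 (lpNorm g (ENNReal.ofReal p) μ)) := by
    refine tendsto_iff_norm_sub_tendsto_zero.2 (squeeze_zero (fun _ => norm_nonneg _)
      (fun i => ?_) hdist)
    rw [Real.norm_eq_abs, abs_sub_le_iff]
    exact ⟨by linarith [lpNorm_le_lpNorm_add_lpNorm_sub' (f := f i) hg hP],
      by linarith [lpNorm_le_lpNorm_add_lpNorm_sub (f := g) (hf i) hP]⟩
  simp only [integral_norm_rpow_eq_lpNorm_rpow hp0 (hf _).1,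
    integral_norm_rpow_eq_lpNorm_rpow hp0 hg.1]
  exact (Real.continuousAt_rpow_const _ p (Or.inr hp0.le)).tendsto.comp hnorm

end LpNorm

noncomputable def firstPassage (F : ℝ → ℝ) (m : ℝ) : ℝ :=
  sInf {t : ℝ | 0 ≤ t ∧ m ≤ F t}

section FirstPassage

variable {F : ℝ → ℝ} {m t : ℝ}

lemma firstPassage_le (ht : 0 ≤ t) (h : m ≤ F t) : firstPassage F m ≤ t :=
  csInf_le ⟨0, fun _ hs => hs.1⟩ ⟨ht, h⟩

lemma apply_lt_of_lt_firstPassage (ht : 0 ≤ t) (h : t < firstPassage F m) : F t < m := by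
  by_contra! h'
  exact (firstPassage_le ht h').not_gt h

lemma nonempty_setOf_le_apply (hF : Monotone fun t => F t - t) (hF0 : 0 ≤ F 0) (hm : 0 ≤ m) :
    {t : ℝ | 0 ≤ t ∧ m ≤ F t}.Nonempty :=
  ⟨m, hm, by linarith [hF hm]⟩

lemma firstPassage_nonneg (hF : Monotone fun t => F t - t) (hF0 : 0 ≤ F 0) (hm : 0 ≤ m) :
    0 ≤ firstPassage F m :=
  le_csInf (nonempty_setOf_le_apply hF hF0 hm) fun _ hs => hs.1

lemma le_firstPassage_of_apply_lt (hF : Monotone fun t => F t - t) (hF0 : 0 ≤ F 0) (hm : 0 ≤ m)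
    (h : F t < m) : t ≤ firstPassage F m :=
  le_csInf (nonempty_setOf_le_apply hF hF0 hm) fun s hs => by
    by_contra! hst
    linarith [hF hst.le, hs.2]

lemma lt_apply_of_firstPassage_lt (hF : Monotone fun t => F t - t) (hF0 : 0 ≤ F 0) (hm : 0 ≤ m)
    (h : firstPassage F m < t) : m < F t := by
  obtain ⟨s, hs, hst⟩ := exists_lt_of_csInf_lt (nonempty_setOf_le_apply hF hF0 hm) h
  linarith [hF hst.le, hs.2]

theorem tendsto_firstPassage {ι : Type*} {l : Filter ι} {G : ι → ℝ → ℝ}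
    (hG : ∀ i, Monotone fun t => G i t - t) (hG0 : ∀ i, 0 ≤ G i 0)
    (hF : Monotone fun t => F t - t) (hF0 : 0 ≤ F 0) (hm : 0 ≤ m)
    (hconv : ∀ t > 0, Tendsto (fun i => G i t) l (𝓝 (F t))) :
    Tendsto (fun i => firstPassage (G i) m) l (𝓝 (firstPassage F m)) := by
  set T := firstPassage F m
  have hT : 0 ≤ T := firstPassage_nonneg hF hF0 hm
  refine tendsto_order.2 ⟨fun a ha => ?_, fun b hb => ?_⟩
  · rcases lt_or_ge a 0 with ha0 | ha0
    · exact Eventually.of_forall fun i => ha0.trans_le (firstPassage_nonneg (hG i) (hG0 i) hm)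
    have hFt : F ((a + T) / 2) < m := apply_lt_of_lt_firstPassage (by linarith) (by linarith)
    filter_upwards [(hconv _ (by linarith)).eventually (eventually_lt_nhds hFt)] with i hi
    exact (by linarith : a < (a + T) / 2).trans_le
      (le_firstPassage_of_apply_lt (hG i) (hG0 i) hm hi)
  · have hFt : m < F ((T + b) / 2) := lt_apply_of_firstPassage_lt hF hF0 hm (by linarith)
    filter_upwards [(hconv _ (by linarith)).eventually (eventually_gt_nhds hFt)] with i hi
    exact (firstPassage_le (by linarith) hi.le).trans_lt (by linarith)

end FirstPassage

section HittingIntegral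

variable {E : Type*} [NormedAddCommGroup E] {p v : ℝ} {y : ℝ → E}

lemma intervalIntegrable_one_add_add_norm_rpow
    (hy : ∀ T, IntervalIntegrable (fun s => ‖y s‖ ^ p) volume 0 T) (a b : ℝ) :
    IntervalIntegrable (fun s => 1 + v + ‖y s‖ ^ p) volume a b :=
  intervalIntegrable_const.add ((hy a).symm.trans (hy b))

lemma monotone_integral_sub_self {f : ℝ → ℝ} (hf : ∀ a b, IntervalIntegrable f volume a b)
    (hf1 : ∀ s, 1 ≤ f s) (c : ℝ) : Monotone fun t => (∫ s in c..t, f s) - t := by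
  intro a b hab
  have hsplit := intervalIntegral.integral_add_adjacent_intervals (hf c a) (hf a b)
  have hslope : b - a ≤ ∫ s in a..b, f s := by
    simpa using intervalIntegral.integral_mono_on hab intervalIntegrable_const (hf a b)
      fun s _ => hf1 s
  dsimp only
  linarith

lemma monotone_integral_one_add_add_norm_rpow_sub_self (hv : 0 ≤ v)
    (hy : ∀ T, IntervalIntegrable (fun s => ‖y s‖ ^ p) volume 0 T) :
    Monotone fun t => (∫ s in (0 : ℝ)..t, (1 + v + ‖y s‖ ^ p)) - t :=
  monotone_integral_sub_self (intervalIntegrable_one_add_add_norm_rpow hy)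
    (fun s => by linarith [Real.rpow_nonneg (norm_nonneg (y s)) p]) 0

lemma integral_one_add_add_norm_rpow
    (hy : ∀ T, IntervalIntegrable (fun s => ‖y s‖ ^ p) volume 0 T) (t : ℝ) :
    ∫ s in (0 : ℝ)..t, (1 + v + ‖y s‖ ^ p) = (1 + v) * t + ∫ s in (0 : ℝ)..t, ‖y s‖ ^ p := by
  rw [intervalIntegral.integral_add intervalIntegrable_const (hy t),
    intervalIntegral.integral_const, smul_eq_mul, sub_zero, mul_comm]

lemma memLp_restrict_Ioc_of_intervalIntegrable [MeasurableSpace E] [OpensMeasurableSpace E]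
    [SecondCountableTopology E] (hp : 0 < p) (hym : Measurable y) {t : ℝ} (ht : 0 ≤ t)
    (hy : IntervalIntegrable (fun s => ‖y s‖ ^ p) volume 0 t) :
    MemLp y (ENNReal.ofReal p) (volume.restrict (Ioc 0 t)) := by
  refine (integrable_norm_rpow_iff hym.aestronglyMeasurable (by simpa using hp)
    ENNReal.ofReal_ne_top).1 ?_
  rw [ENNReal.toReal_ofReal hp.le]
  exact (intervalIntegrable_iff_integrableOn_Ioc_of_le ht).1 hy

lemma tendsto_integral_one_add_add_norm_rpow [MeasurableSpace E] [OpensMeasurableSpace E]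
    [SecondCountableTopology E] (hp : 1 ≤ p) {u : ℕ → ℝ} {x : ℕ → ℝ → E}
    (hxm : ∀ n, Measurable (x n)) (hym : Measurable y)
    (hxloc : ∀ n T, IntervalIntegrable (fun s => ‖x n s‖ ^ p) volume 0 T)
    (hy : ∀ T, IntervalIntegrable (fun s => ‖y s‖ ^ p) volume 0 T)
    (hu : Tendsto u atTop (𝓝 v)) {t : ℝ} (ht : 0 < t)
    (hx : Tendsto (fun n => ∫ s in (0 : ℝ)..t, ‖x n s - y s‖ ^ p) atTop (𝓝 0)) :
    Tendsto (fun n => ∫ s in (0 : ℝ)..t, (1 + u n + ‖x n s‖ ^ p)) atTop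
      (𝓝 (∫ s in (0 : ℝ)..t, (1 + v + ‖y s‖ ^ p))) := by
  have hp0 : 0 < p := zero_lt_one.trans_le hp
  simp only [integral_one_add_add_norm_rpow (hxloc _), integral_one_add_add_norm_rpow hy,
    intervalIntegral.integral_of_le ht.le] at hx ⊢
  exact ((tendsto_const_nhds.add hu).mul_const t).add <| tendsto_integral_norm_rpow hp
    (fun n => memLp_restrict_Ioc_of_intervalIntegrable hp0 (hxm n) ht.le (hxloc n t))
    (memLp_restrict_Ioc_of_intervalIntegrable hp0 hym ht.le (hy t)) hx

end HittingIntegral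

/-- `T_m` is (sequentially) continuous on `[0,1] × L^p_loc([0,∞), ℝ^d)` for the
product of the usual topology on `[0,1]` and the local `L^p` topology. -/
theorem stmt10 {d : ℕ} (p : ℝ) (hp : 1 ≤ p) (m : ℝ) (hm : 0 < m)
    (u : ℕ → ℝ) (ulim : ℝ) (hu : ∀ n, u n ∈ Icc (0 : ℝ) 1) (hulim : ulim ∈ Icc (0 : ℝ) 1)
    (x : ℕ → ℝ → EuclideanSpace ℝ (Fin d)) (xlim : ℝ → EuclideanSpace ℝ (Fin d))
    (hxm : ∀ n, Measurable (x n)) (hxlimm : Measurable xlim)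
    (hxloc : ∀ n, ∀ T : ℝ, IntervalIntegrable (fun s => ‖x n s‖ ^ p) volume 0 T)
    (hxlimloc : ∀ T : ℝ, IntervalIntegrable (fun s => ‖xlim s‖ ^ p) volume 0 T)
    (huconv : Tendsto u atTop (nhds ulim))
    (hxconv : ∀ T > (0 : ℝ),
      Tendsto (fun n => ∫ s in (0 : ℝ)..T, ‖x n s - xlim s‖ ^ p) atTop (nhds 0)) :
    Tendsto (fun n => hittingTimeLp p m (u n) (x n)) atTop
      (nhds (hittingTimeLp p m ulim xlim)) :=
  -- `hittingTimeLp p m u x` is `firstPassage (fun t => ∫ s in 0..t, 1 + u + ‖x s‖ ^ p) m`.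
  tendsto_firstPassage
    (fun n => monotone_integral_one_add_add_norm_rpow_sub_self (hu n).1 (hxloc n))
    (fun _ => by simp)
    (monotone_integral_one_add_add_norm_rpow_sub_self hulim.1 hxlimloc) (by simp) hm.le
    fun t ht => tendsto_integral_one_add_add_norm_rpow hp hxm hxlimm hxloc hxlimloc huconv ht
      (hxconv t ht)
end
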